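/- Let X be a chain. For every order-preserving partial transformation α of X there exists an injective order-preserving partial transformation β of X such that αβα = α. In particular, the monoid PO(X) of all order-preserving partial transformations of X is regular. -/

import Mathlib

/-!
Send each point `y` of the image of `α` to a chosen preimage. This partial map is injective
because `α` is single-valued, it is order-preserving because `α` is (two chosen preimages in the
wrong order would force their images to coincide), and `αβα = α` since `β` only ever moves a
value of `α` back into its fibre.
-/

variable {X : Type*}

/-- The partial transformation `f` is order-preserving (on its domain). -/
def IsOrdPartial [LinearOrder X] (f : X →. X) : Prop :=
  ∀ ⦃x y u v : X⦄, x ≤ y → u ∈ f x → v ∈ f y → u ≤ v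

namespace PFun

variable {α β : Type*}

noncomputable def choiceInv (f : α →. β) : β →. α :=
  fun y => ⟨∃ x, y ∈ f x, Classical.choose⟩

theorem mem_of_mem_choiceInv {f : α →. β} {x : α} {y : β} (h : x ∈ choiceInv f y) : y ∈ f x := by
  obtain ⟨hy, rfl⟩ := h
  exact Classical.choose_spec hy

theorem eq_of_mem_choiceInv_of_mem_choiceInv {f : α →. β} {x : α} {y y' : β}
    (h : x ∈ choiceInv f y) (h' : x ∈ choiceInv f y') : y = y' :=
  Part.mem_unique (mem_of_mem_choiceInv h) (mem_of_mem_choiceInv h')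

theorem comp_comp_choiceInv (f : α →. β) : f.comp ((choiceInv f).comp f) = f := by
  refine PFun.ext fun x z => ⟨fun hz => ?_, fun hz => ?_⟩
  · obtain ⟨x', hx', hz⟩ := Part.mem_bind_iff.mp hz
    obtain ⟨y, hy, hx'⟩ := Part.mem_bind_iff.mp hx'
    rwa [Part.mem_unique hz (mem_of_mem_choiceInv hx')]
  · have hdom : (choiceInv f z).Dom := ⟨x, hz⟩
    exact Part.mem_bind_iff.mpr ⟨_, Part.mem_bind_iff.mpr ⟨z, hz, Part.get_mem hdom⟩,
      mem_of_mem_choiceInv (Part.get_mem hdom)⟩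

end PFun

theorem IsOrdPartial.choiceInv [LinearOrder X] {f : X →. X} (hf : IsOrdPartial f) :
    IsOrdPartial (PFun.choiceInv f) := by
  intro y y' x x' hyy' hx hx'
  by_contra! hlt
  have hy'y : y' ≤ y := hf hlt.le (PFun.mem_of_mem_choiceInv hx') (PFun.mem_of_mem_choiceInv hx)
  obtain rfl := le_antisymm hyy' hy'y
  exact hlt.ne (Part.mem_unique hx' hx)

theorem stmt8 (X : Type*) [LinearOrder X] (α : X →. X) (hα : IsOrdPartial α) :
    ∃ β : X →. X, IsOrdPartial β ∧ (∀ ⦃x y u : X⦄, u ∈ β x → u ∈ β y → x = y) ∧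
      α.comp (β.comp α) = α :=
  ⟨PFun.choiceInv α, hα.choiceInv, fun _ _ _ => PFun.eq_of_mem_choiceInv_of_mem_choiceInv,
    PFun.comp_comp_choiceInv α⟩
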